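/- Trichotomy for natural numbers: if S and T are natural numbers (ordinal numbers with first number α), then S ∈ T or S = T or T ∈ S. -/

import Mathlib

/-- Extensional equality of objects: `s = t` iff they have the same members. -/
def eqE {Obj : Type} (mem : Obj → Obj → Prop) (s t : Obj) : Prop :=
  ∀ u, mem u s ↔ mem u t

/-- Inclusion: `a ⊆ b`. -/
def subE {Obj : Type} (mem : Obj → Obj → Prop) (a b : Obj) : Prop :=
  ∀ u, mem u a → mem u b

/-- `w` is the union `⋃ s`. -/
def isUnionOf {Obj : Type} (mem : Obj → Obj → Prop) (w s : Obj) : Prop :=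
  ∀ u, mem u w ↔ ∃ z, mem z s ∧ mem u z

/-- `t` is the successor `s ∪ {s}` of `s` (membership expressed directly). -/
def isSuccOf {Obj : Type} (mem : Obj → Obj → Prop) (t s : Obj) : Prop :=
  ∀ u, mem u t ↔ (mem u s ∨ eqE mem u s)

/-- `S` is an ordinal number with first number `α`:  `S ∉ α` and every
`X ∈ S ∪ {S}` satisfies `X ∈ α ∪ {α}` or (`α ∈ X` and `X = ⋃X ∪ {⋃X}`). -/
def isNat {Obj : Type} (mem : Obj → Obj → Prop) (α S : Obj) : Prop :=
  ¬ mem S α ∧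
  ∀ X, (mem X S ∨ eqE mem X S) →
    (mem X α ∨ eqE mem X α) ∨
    (mem α X ∧ ∃ U, isUnionOf mem U X ∧ isSuccOf mem X U)

/-
Regularity only speaks about sets that are not members of themselves. In a natural number `M`,
an element of `M ∪ {M}` that is not a member of itself does not lie in the set `α` of
individuals, so it equals `α` or is a successor `w ∪ {w}` of some `w ∈ M` with `w ∉ w` (were
`w ∈ w`, then `w ∪ {w} = w`). Hence regularity gives induction along `M ∪ {M}`. Induction along
`T ∪ {T}` shows that `n ∈ m` implies `n ∪ {n} ∈ m` or `n ∪ {n} = m`; with this, induction along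
`S ∪ {S}` proves that every `X` there satisfies `X ∈ T ∨ X = T ∨ T ∈ X`.
-/
variable {Obj : Type} {mem : Obj → Obj → Prop}

theorem eqE_refl (a : Obj) : eqE mem a a := fun _ => Iff.rfl

theorem eqE.symm {a b : Obj} (h : eqE mem a b) : eqE mem b a := fun u => (h u).symm

theorem eqE.trans {a b c : Obj} (hab : eqE mem a b) (hbc : eqE mem b c) : eqE mem a c :=
  fun u => (hab u).trans (hbc u)

theorem mem_self_of_eqE (subst : ∀ s t v, eqE mem s t → mem t v → mem s v) {a b : Obj}
    (hab : eqE mem a b) (hb : mem b b) : mem a a :=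
  (hab a).mpr (subst a b b hab hb)

theorem mem_of_isSuccOf {x w : Obj} (hx : isSuccOf mem x w) : mem w x :=
  (hx w).mpr (Or.inr (eqE_refl w))

theorem mem_self_of_isSuccOf (subst : ∀ s t v, eqE mem s t → mem t v → mem s v) {x w : Obj}
    (hx : isSuccOf mem x w) (hw : mem w w) : mem x x := by
  have hxw : eqE mem x w := fun u =>
    (hx u).trans ⟨fun h => h.elim id fun huw => subst u w w huw hw, Or.inl⟩
  exact mem_self_of_eqE subst hxw hw

theorem eqE_of_isSuccOf {x y v w : Obj} (hvw : eqE mem v w) (hx : isSuccOf mem x v)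
    (hy : isSuccOf mem y w) : eqE mem x y := fun u => by
  rw [hx u, hy u, hvw u]
  exact or_congr_right ⟨fun h => h.trans hvw, fun h => h.trans hvw.symm⟩

theorem regularity_induction
    (spec : ∀ (Φ : Obj → Prop) (s : Obj), (∃ u, mem u s ∧ Φ u) →
      ∃ v, ∀ u, mem u v ↔ (mem u s ∧ Φ u))
    (regularity : ∀ s, (∃ v, mem v s ∧ ¬ mem v v) →
      ∃ v, mem v s ∧ ¬ mem v v ∧ ∀ u, mem u s → ¬ mem u u → ¬ mem u v)
    {s : Obj} {Φ : Obj → Prop}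
    (step : ∀ x, mem x s → ¬ mem x x → (∀ y, mem y s → ¬ mem y y → mem y x → Φ y) → Φ x) :
    ∀ x, mem x s → ¬ mem x x → Φ x := by
  by_contra! ⟨x, hxs, hxx, hΦx⟩
  obtain ⟨d, hd⟩ := spec (fun u => ¬ mem u u ∧ ¬ Φ u) s ⟨x, hxs, hxx, hΦx⟩
  obtain ⟨m, hmd, hmm, hmin⟩ := regularity d ⟨x, (hd x).mpr ⟨hxs, hxx, hΦx⟩, hxx⟩
  obtain ⟨hms, -, hΦm⟩ := (hd m).mp hmd
  refine hΦm (step m hms hmm fun y hys hyy hym => ?_)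
  by_contra hΦy
  exact hmin y ((hd y).mpr ⟨hys, hyy, hΦy⟩) hyy hym

namespace isNat

variable {α M : Obj}

theorem eqE_or_isSuccOf (hM : isNat mem α M) :
    eqE mem M α ∨ mem α M ∧ ∃ U, isUnionOf mem U M ∧ isSuccOf mem M U :=
  (or_assoc.mp (hM.2 M (Or.inr (eqE_refl M)))).resolve_left hM.1

theorem not_mem_self (indiv : ∀ p s, mem s p → mem p p → eqE mem s p)
    (hM : isNat mem α M) : ¬ mem M M := fun hMM =>
  hM.1 <| hM.eqE_or_isSuccOf.elim (fun hMα => (hMα M).mp hMM)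
    fun ⟨hαM, _⟩ => (indiv M α hαM hMM M).mpr hMM

theorem mem_trans (subst : ∀ s t v, eqE mem s t → mem t v → mem s v)
    (indiv : ∀ p s, mem s p → mem p p → eqE mem s p) (hαind : ∀ x, mem x α → mem x x)
    (hM : isNat mem α M) {x y : Obj} (hyx : mem y x) (hxM : mem x M) : mem y M := by
  rcases hM.eqE_or_isSuccOf with hMα | ⟨-, U, hU, hMU⟩
  · exact subst y x M (indiv x y hyx (hαind x ((hMα x).mp hxM))) hxM
  · exact (hMU y).mpr (Or.inl ((hU y).mpr ⟨x, hxM, hyx⟩))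

theorem induction (subst : ∀ s t v, eqE mem s t → mem t v → mem s v)
    (indiv : ∀ p s, mem s p → mem p p → eqE mem s p)
    (spec : ∀ (Φ : Obj → Prop) (s : Obj), (∃ u, mem u s ∧ Φ u) →
      ∃ v, ∀ u, mem u v ↔ (mem u s ∧ Φ u))
    (regularity : ∀ s, (∃ v, mem v s ∧ ¬ mem v v) →
      ∃ v, mem v s ∧ ¬ mem v v ∧ ∀ u, mem u s → ¬ mem u u → ¬ mem u v)
    (hαind : ∀ x, mem x α → mem x x) (hM : isNat mem α M) {Φ : Obj → Prop}
    (base : ∀ x, eqE mem x α → Φ x)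
    (succ : ∀ x w, isSuccOf mem x w → ¬ mem w w → Φ w → Φ x) :
    ∀ x, (mem x M ∨ eqE mem x M) → ¬ mem x x → Φ x := by
  have step : ∀ x, (mem x M ∨ eqE mem x M) → ¬ mem x x →
      (∀ y, mem y M → ¬ mem y y → mem y x → Φ y) → Φ x := by
    intro x hxM hxx ih
    rcases hM.2 x hxM with (hxα | hxα) | ⟨-, w, -, hxw⟩
    · exact absurd (hαind x hxα) hxx
    · exact base x hxα
    · have hwx : mem w x := mem_of_isSuccOf hxw
      have hww : ¬ mem w w := fun hww => hxx (mem_self_of_isSuccOf subst hxw hww)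
      have hwM : mem w M :=
        hxM.elim (hM.mem_trans subst indiv hαind hwx) fun hxM => (hxM w).mp hwx
      exact succ x w hxw hww (ih w hwM hww hwx)
  have below := regularity_induction spec regularity fun x hx => step x (Or.inl hx)
  exact fun x hxM hxx => step x hxM hxx fun y hyM hyy _ => below y hyM hyy

theorem succ_mem_or_eqE (subst : ∀ s t v, eqE mem s t → mem t v → mem s v)
    (indiv : ∀ p s, mem s p → mem p p → eqE mem s p)
    (spec : ∀ (Φ : Obj → Prop) (s : Obj), (∃ u, mem u s ∧ Φ u) →
      ∃ v, ∀ u, mem u v ↔ (mem u s ∧ Φ u))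
    (regularity : ∀ s, (∃ v, mem v s ∧ ¬ mem v v) →
      ∃ v, mem v s ∧ ¬ mem v v ∧ ∀ u, mem u s → ¬ mem u u → ¬ mem u v)
    (hαind : ∀ x, mem x α → mem x x) (hM : isNat mem α M) {n y : Obj}
    (hnn : ¬ mem n n) (hnM : mem n M) (hy : isSuccOf mem y n) :
    mem y M ∨ eqE mem y M := by
  refine hM.induction subst indiv spec regularity hαind
    (Φ := fun m => ∀ n y, ¬ mem n n → mem n m → isSuccOf mem y n → mem y m ∨ eqE mem y m)
    (fun m hmα n _ hnn hnm _ => absurd (hαind n ((hmα n).mp hnm)) hnn) ?_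
    M (Or.inr (eqE_refl M)) (hM.not_mem_self indiv) n y hnn hnM hy
  intro m w hmw _ ih n y hnn hnm hy
  rcases (hmw n).mp hnm with hnw | hnw
  · exact Or.inl ((hmw y).mpr (ih n y hnn hnw hy))
  · exact Or.inr (eqE_of_isSuccOf hnw hy hmw)

end isNat

theorem nat_trichotomy_general {Obj : Type} (mem : Obj → Obj → Prop)
    (subst : ∀ s t v, eqE mem s t → mem t v → mem s v)
    (indiv : ∀ p s, mem s p → mem p p → eqE mem s p)
    (regularity : ∀ s, (∃ v, mem v s ∧ ¬ mem v v) →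
      ∃ v, mem v s ∧ ¬ mem v v ∧ ∀ u, mem u s → ¬ mem u u → ¬ mem u v)
    (spec : ∀ (Φ : Obj → Prop) (s : Obj), (∃ u, mem u s ∧ Φ u) →
      ∃ v, ∀ u, mem u v ↔ (mem u s ∧ Φ u))
    (p q α : Obj) (hp : mem p p) (hq : mem q q)
    (hα : ∀ u, mem u α ↔ (eqE mem u p ∨ eqE mem u q))
    (S T : Obj) (hS : isNat mem α S) (hT : isNat mem α T) :
    mem S T ∨ eqE mem S T ∨ mem T S := by
  have hαind : ∀ x, mem x α → mem x x := fun x hx =>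
    ((hα x).mp hx).elim (fun h => mem_self_of_eqE subst h hp) fun h => mem_self_of_eqE subst h hq
  refine hS.induction subst indiv spec regularity hαind
    (Φ := fun x => mem x T ∨ eqE mem x T ∨ mem T x) ?_ ?_ S (Or.inr (eqE_refl S))
    (hS.not_mem_self indiv)
  · intro x hxα
    rcases hT.eqE_or_isSuccOf with hTα | ⟨hαT, -⟩
    · exact Or.inr (Or.inl (hxα.trans hTα.symm))
    · exact Or.inl (subst x α T hxα hαT)
  · intro x w hxw hww ih
    rcases ih with hwT | hwT | hTw
    · exact (hT.succ_mem_or_eqE subst indiv spec regularity hαind hww hwT hxw).imp_right Or.inl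
    · exact Or.inr (Or.inr (subst T w x hwT.symm (mem_of_isSuccOf hxw)))
    · exact Or.inr (Or.inr ((hxw T).mpr (Or.inl hTw)))

/-- Trichotomy for natural numbers. -/
theorem nat_trichotomy {Obj : Type} (mem : Obj → Obj → Prop)
    (subst : ∀ s t v, eqE mem s t → mem t v → mem s v)
    (indiv : ∀ p s, mem s p → mem p p → eqE mem s p)
    (pairing : ∀ s t, ∃ v, ∀ u, mem u v ↔ (eqE mem u s ∨ eqE mem u t))
    (union : ∀ s, ∃ v, isUnionOf mem v s)
    (regularity : ∀ s, (∃ v, mem v s ∧ ¬ mem v v) →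
      ∃ v, mem v s ∧ ¬ mem v v ∧ ∀ u, mem u s → ¬ mem u u → ¬ mem u v)
    (spec : ∀ (Φ : Obj → Prop) (s : Obj), (∃ u, mem u s ∧ Φ u) →
      ∃ v, ∀ u, mem u v ↔ (mem u s ∧ Φ u))
    (nonemptyAx : ∀ t : Obj, ∃ u, mem u t)
    (p q α : Obj) (hp : mem p p) (hq : mem q q)
    (hα : ∀ u, mem u α ↔ (eqE mem u p ∨ eqE mem u q))
    (S T : Obj) (hS : isNat mem α S) (hT : isNat mem α T) :
    mem S T ∨ eqE mem S T ∨ mem T S :=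
  nat_trichotomy_general mem subst indiv regularity spec p q α hp hq hα S T hS hT
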